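/- arXiv:2404.17011 — 4 statements merged into one kernel-verified Lean document; each statement's English description precedes it below -/
import Mathlib

section
/- Let T=(V,E) be a forest, ≪ a linear order on V, and i ≥ 2 an integer. If the First-Fit coloring of T in order ≪ assigns color i to some vertex, then the orientation T^≪ contains a bidirected path with exactly 2i−2 vertices. -/
noncomputable def ffAux {V : Type*} (G : SimpleGraph V) (ord : V → ℕ) (t : ℕ) (v : V) : ℕ :=
  sInf {i : ℕ | 0 < i ∧ ∀ u, G.Adj u v → ∀ h : ord u < t, ffAux G ord (ord u) u ≠ i}
termination_by t
decreasing_by exact h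

/-- The color that First-Fit assigns to vertex `v` when coloring `G` in the
presentation order in which `u` comes before `w` iff `ord u < ord w`. -/
noncomputable def ffColor {V : Type*} (G : SimpleGraph V) (ord : V → ℕ) (v : V) : ℕ :=
  ffAux G ord (ord v) v

/-- The number of colors used by First-Fit on `G` in the order given by `ord`. -/
noncomputable def ffNumColors {V : Type*} [Fintype V] (G : SimpleGraph V) (ord : V → ℕ) : ℕ :=
  (Finset.univ.image (ffColor G ord)).card

/-- Expected number of colors used by First-Fit on `G` in a uniformly random order. -/
noncomputable def ffExpect {V : Type*} [Fintype V] (G : SimpleGraph V) : ℝ :=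
  letI := Classical.decEq V
  (∑ e : V ≃ Fin (Fintype.card V), (ffNumColors G (fun v => (e v : ℕ)) : ℝ)) /
    (Nat.factorial (Fintype.card V) : ℝ)

/-- Expected value of χ_FF(G,≪)/χ(G) over a uniformly random order ≪. -/
noncomputable def ffRatioExpect {V : Type*} [Fintype V] (G : SimpleGraph V) : ℝ :=
  letI := Classical.decEq V
  (∑ e : V ≃ Fin (Fintype.card V),
      (ffNumColors G (fun v => (e v : ℕ)) : ℝ) / (G.chromaticNumber.toNat : ℝ)) /
    (Nat.factorial (Fintype.card V) : ℝ)

/-- Probability, over a uniformly random presentation order of the vertex set `V`,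
of the event `P` (a property of the position function of the order). -/
noncomputable def ffProb {V : Type*} [Fintype V] (P : (V → ℕ) → Prop) : ℝ :=
  letI := Classical.decEq V
  letI := Classical.decPred (fun e : V ≃ Fin (Fintype.card V) => P (fun v => (e v : ℕ)))
  ((Finset.univ.filter (fun e : V ≃ Fin (Fintype.card V) => P (fun v => (e v : ℕ)))).card : ℝ) /
    (Nat.factorial (Fintype.card V) : ℝ)

/-- `RFF n`: the maximum over all forests on `n` vertices of the expected value of
χ_FF(T,≪)/χ(T) over a uniformly random order ≪. -/
noncomputable def RFF (n : ℕ) : ℝ :=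
  sSup {x : ℝ | ∃ G : SimpleGraph (Fin n), G.IsAcyclic ∧ x = ffRatioExpect G}

/-- `l` is a bidirected (simple) path in the orientation of `G` induced by `ord`. -/
def IsBidirected {V : Type*} (G : SimpleGraph V) (ord : V → ℕ) (l : List V) : Prop :=
  l.Nodup ∧ ∃ (l₁ l₂ : List V) (m : V), l = l₁ ++ m :: l₂ ∧
    List.Chain' (fun a b => G.Adj a b ∧ ord a < ord b) (l₁ ++ [m]) ∧
    List.Chain' (fun a b => G.Adj a b ∧ ord b < ord a) (m :: l₂)

/-- Vertices of the tree `T^r_i`: lists of pairs `(j,q)` with strictly decreasing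
positive first coordinates, starting below `i`. -/
def TVert (r i : ℕ) : Type :=
  {l : List (Fin i × Fin r) //
    List.Chain (fun a b => b < a) i (l.map fun p => (p.1 : ℕ)) ∧ ∀ p ∈ l, 1 ≤ (p.1 : ℕ)}

/-- The root of `T^r_i`. -/
def TRoot (r i : ℕ) : TVert r i := ⟨[], List.IsChain.singleton _, by simp⟩

/-- The tree `T^r_i`: a vertex is adjacent to each of its one-step extensions. -/
def TGraph (r i : ℕ) : SimpleGraph (TVert r i) :=
  SimpleGraph.fromRel (fun u v => ∃ x, v.val = u.val ++ [x])

instance (r i : ℕ) : Finite (TVert r i) := by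
  have hinj : Function.Injective
      (fun v : TVert r i => (⟨v.val, by
        have h := v.property.1
        haveI : IsTrans ℕ (fun a b => b < a) := ⟨fun a b c h1 h2 => lt_trans h2 h1⟩
        haveI : Trans (fun a b : ℕ => b < a) (fun a b : ℕ => b < a) (fun a b : ℕ => b < a) :=
          ⟨fun h1 h2 => lt_trans h2 h1⟩
        replace h : List.IsChain (fun a b : ℕ => b < a) (i :: _) := h
        rw [List.isChain_iff_pairwise] at h
        have h2 := (List.pairwise_cons.mp h).2
        exact List.Nodup.of_map _ (h2.imp fun hab => (ne_of_lt hab).symm)⟩ :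
        {l : List (Fin i × Fin r) // l.Nodup})) :=
    fun a b hab => Subtype.ext (Subtype.mk_eq_mk.mp hab)
  exact Finite.of_injective _ hinj

noncomputable instance (r i : ℕ) : Fintype (TVert r i) := Fintype.ofFinite _

section FFAux

variable {V : Type*} [Fintype V] {T : SimpleGraph V} {ord : V → ℕ}

private lemma ffColor_eq (T : SimpleGraph V) (ord : V → ℕ) (v : V) :
    ffColor T ord v =
      sInf {i : ℕ | 0 < i ∧ ∀ u, T.Adj u v → ord u < ord v → ffColor T ord u ≠ i} := by
  rw [ffColor, ffAux]
  rfl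

private lemma ffColor_set_nonempty (T : SimpleGraph V) (ord : V → ℕ) (v : V) :
    {i : ℕ | 0 < i ∧ ∀ u, T.Adj u v → ord u < ord v → ffColor T ord u ≠ i}.Nonempty :=
  ⟨Finset.univ.sup (ffColor T ord) + 1, Nat.succ_pos _,
    fun u _ _ => Nat.ne_of_lt (Nat.lt_succ_of_le (Finset.le_sup (Finset.mem_univ u)))⟩

private lemma ffColor_mem (v : V) :
    0 < ffColor T ord v ∧
      ∀ u, T.Adj u v → ord u < ord v → ffColor T ord u ≠ ffColor T ord v := by
  have h := Nat.sInf_mem (ffColor_set_nonempty T ord v)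
  rw [← ffColor_eq T ord v] at h
  exact h

private lemma ffColor_pos (v : V) : 0 < ffColor T ord v := (ffColor_mem v).1

private lemma exists_nbr (v : V) {c : ℕ} (hc : 0 < c) (hlt : c < ffColor T ord v) :
    ∃ u, T.Adj u v ∧ ord u < ord v ∧ ffColor T ord u = c := by
  by_contra h
  push_neg at h
  have hmem : c ∈ {i : ℕ | 0 < i ∧ ∀ u, T.Adj u v → ord u < ord v → ffColor T ord u ≠ i} :=
    ⟨hc, fun u hadj hu => h u hadj hu⟩
  have := Nat.sInf_le hmem
  rw [← ffColor_eq T ord v] at this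
  omega

/-- The descending relation used for the two branches of the bidirected path. -/
private def DRel (T : SimpleGraph V) (ord : V → ℕ) (a b : V) : Prop :=
  T.Adj a b ∧ ord b < ord a ∧ ffColor T ord b < ffColor T ord a

private lemma exists_desc :
    ∀ (c : ℕ) (v : V), ffColor T ord v = c →
      ∃ l : List V, l.length = c ∧ l.head? = some v ∧ List.Chain' (DRel T ord) l := by
  intro c
  induction c with
  | zero => intro v hv; exact absurd hv (by have := ffColor_pos (T := T) (ord := ord) v; omega)
  | succ c ih =>
    intro v hv
    rcases Nat.eq_zero_or_pos c with h0 | hpos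
    · subst h0; exact ⟨[v], rfl, rfl, List.isChain_singleton v⟩
    · obtain ⟨u, hadj, hou, hu⟩ := exists_nbr (T := T) (ord := ord) v hpos (by omega)
      obtain ⟨l, hl, hh, hch⟩ := ih u hu
      cases l with
      | nil => simp at hl; omega
      | cons b t =>
        have hb : b = u := by simpa using hh
        subst hb
        exact ⟨v :: b :: t, by rw [List.length_cons, hl], rfl,
          List.isChain_cons_cons.mpr ⟨⟨hadj.symm, hou, by omega⟩, hch⟩⟩

private lemma desc_pairwise {l : List V} (h : List.Chain' (DRel T ord) l) :
    List.Pairwise (fun a b => ffColor T ord b < ffColor T ord a) l := by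
  haveI : IsTrans V (fun a b => ffColor T ord b < ffColor T ord a) :=
    ⟨fun a b c h1 h2 => lt_trans h2 h1⟩
  haveI : Trans (fun a b : V => ffColor T ord b < ffColor T ord a)
      (fun a b : V => ffColor T ord b < ffColor T ord a)
      (fun a b : V => ffColor T ord b < ffColor T ord a) := ⟨fun h1 h2 => lt_trans h2 h1⟩
  exact List.isChain_iff_pairwise.mp (List.IsChain.imp (fun a b hab => hab.2.2) h)

private lemma desc_nodup {l : List V} (h : List.Chain' (DRel T ord) l) : l.Nodup :=
  (desc_pairwise h).imp fun hab => by intro he; rw [he] at hab; omega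

private lemma desc_adj_chain {v : V} {l : List V} (h : List.Chain' (DRel T ord) (v :: l)) :
    List.Chain T.Adj v l := by
  have h' : List.Chain (DRel T ord) v l := h
  exact List.IsChain.imp (fun _ _ hab => hab.1) h'

/-- A list that is a chain for the adjacency relation yields a walk whose support is the list. -/
private lemma walk_of_chain (T : SimpleGraph V) :
    ∀ (l : List V) (a b : V), List.Chain T.Adj a l → l.getLast? = some b →
      ∃ w : T.Walk a b, w.support = a :: l := by
  intro l
  induction l with
  | nil => intro a b _ h; simp at h
  | cons c t ih =>
    intro a b hch hlast
    simp only [List.Chain, List.chain_cons] at hch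
    cases t with
    | nil =>
      simp only [List.getLast?_singleton, Option.some.injEq] at hlast
      subst hlast
      exact ⟨SimpleGraph.Walk.cons hch.1 SimpleGraph.Walk.nil, by simp⟩
    | cons d t' =>
      rw [List.getLast?_cons_cons] at hlast
      obtain ⟨w, hw⟩ := ih c b hch.2 hlast
      exact ⟨SimpleGraph.Walk.cons hch.1 w, by simp [hw]⟩

private lemma head?_of_split {w u : V} :
    ∀ (p s L : List V), p ++ w :: s = u :: L → (p ++ [w]).head? = some u := by
  intro p s L h
  cases p with
  | nil =>
    simp only [List.nil_append, List.cons.injEq] at h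
    simp [h.1]
  | cons x p' =>
    simp only [List.cons_append, List.cons.injEq] at h
    simp [h.1]

/-- In an acyclic graph, two branches hanging off distinct neighbors of `v`
(along chains that are simple when prepended with `v`) are vertex-disjoint. -/
private lemma branch_disjoint (hT : T.IsAcyclic) {v u₁ u₂ : V} {L1 L2 : List V}
    (h1 : List.Chain T.Adj v (u₁ :: L1)) (h2 : List.Chain T.Adj v (u₂ :: L2))
    (hn1 : (v :: u₁ :: L1).Nodup) (hn2 : (v :: u₂ :: L2).Nodup)
    (hne : u₁ ≠ u₂) : ∀ w, w ∈ u₁ :: L1 → w ∉ u₂ :: L2 := by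
  intro w hw1 hw2
  obtain ⟨p1, s1, he1⟩ := List.append_of_mem hw1
  obtain ⟨p2, s2, he2⟩ := List.append_of_mem hw2
  rw [he1] at h1 hn1
  rw [he2] at h2 hn2
  have hc1 : List.Chain T.Adj v (p1 ++ [w]) := (List.isChain_cons_split.mp h1).1
  have hc2 : List.Chain T.Adj v (p2 ++ [w]) := (List.isChain_cons_split.mp h2).1
  have hlast1 : (p1 ++ [w]).getLast? = some w := by simp
  have hlast2 : (p2 ++ [w]).getLast? = some w := by simp
  obtain ⟨w1, hs1⟩ := walk_of_chain T _ v w hc1 hlast1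
  obtain ⟨w2, hs2⟩ := walk_of_chain T _ v w hc2 hlast2
  have hsub1 : (v :: (p1 ++ [w])).Sublist (v :: (p1 ++ w :: s1)) :=
    List.Sublist.cons₂ v ((List.cons_sublist_cons.mpr (List.nil_sublist s1)).append_left p1)
  have hsub2 : (v :: (p2 ++ [w])).Sublist (v :: (p2 ++ w :: s2)) :=
    List.Sublist.cons₂ v ((List.cons_sublist_cons.mpr (List.nil_sublist s2)).append_left p2)
  have hp1 : w1.IsPath := by
    rw [SimpleGraph.Walk.isPath_def, hs1]; exact hsub1.nodup hn1
  have hp2 : w2.IsPath := by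
    rw [SimpleGraph.Walk.isPath_def, hs2]; exact hsub2.nodup hn2
  have hpq : (⟨w1, hp1⟩ : T.Path v w) = ⟨w2, hp2⟩ := hT.path_unique _ _
  have hsupp : w1.support = w2.support := by
    rw [Subtype.mk_eq_mk] at hpq; rw [hpq]
  rw [hs1, hs2] at hsupp
  have hlists : p1 ++ [w] = p2 ++ [w] := by
    simpa using hsupp
  have hh1 : (p1 ++ [w]).head? = some u₁ := head?_of_split p1 s1 L1 he1.symm
  have hh2 : (p2 ++ [w]).head? = some u₂ := head?_of_split p2 s2 L2 he2.symm
  rw [hlists, hh2] at hh1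
  exact hne (Option.some.injEq _ _ ▸ hh1).symm

end FFAux

/-- If First-Fit assigns color `i ≥ 2` to some vertex of a forest `T` when coloring it in
the order given by the injective position function `ord`, then the orientation `T^≪`
contains a bidirected path with exactly `2i − 2` vertices. -/
theorem ff_color_gives_bidirected_path {V : Type*} [Fintype V] (T : SimpleGraph V)
    (hT : T.IsAcyclic) (ord : V → ℕ) (hord : Function.Injective ord)
    (i : ℕ) (hi : 2 ≤ i) (v : V) (hcol : ffColor T ord v = i) :
    ∃ l : List V, l.length = 2 * i - 2 ∧ IsBidirected T ord l := by
  classical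
  -- first branch: from a neighbor of color i - 1
  obtain ⟨u₁, hadj1, hou1, hc1⟩ := exists_nbr (T := T) (ord := ord) v (c := i - 1) (by omega) (by omega)
  obtain ⟨l1, hl1len, hl1head, hch1⟩ := exists_desc (i - 1) u₁ hc1
  obtain ⟨t1, rfl⟩ : ∃ t1, l1 = u₁ :: t1 := by
    cases l1 with
    | nil => simp at hl1head
    | cons b t =>
      have : b = u₁ := by simpa using hl1head
      exact ⟨t, by rw [this]⟩
  -- the chain including v
  have hch1' : List.Chain' (DRel T ord) (v :: u₁ :: t1) :=
    List.isChain_cons_cons.mpr ⟨⟨hadj1.symm, hou1, by omega⟩, hch1⟩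
  have hn1 : (v :: u₁ :: t1).Nodup := desc_nodup hch1'
  have hcolle1 : ∀ w ∈ u₁ :: t1, ffColor T ord w ≤ i - 1 := by
    intro w hw
    rcases List.mem_cons.mp hw with rfl | hw
    · omega
    · have := (List.pairwise_cons.mp (desc_pairwise hch1)).1 w hw
      omega
  -- second branch: empty if i = 2, otherwise from a neighbor of color i - 2
  have hsecond : ∃ l2 : List V, l2.length = i - 2 ∧
      List.Chain' (DRel T ord) (v :: l2) ∧ (v :: l2).Nodup ∧
      ∀ w ∈ u₁ :: t1, w ∉ l2 := by
    rcases eq_or_lt_of_le hi with h2 | h3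
    · exact ⟨[], by rw [List.length_nil, ← h2], List.isChain_singleton v, List.nodup_singleton v, by simp⟩
    · obtain ⟨u₂, hadj2, hou2, hc2⟩ := exists_nbr (T := T) (ord := ord) v (c := i - 2) (by omega) (by omega)
      obtain ⟨l2, hl2len, hl2head, hch2⟩ := exists_desc (i - 2) u₂ hc2
      obtain ⟨t2, rfl⟩ : ∃ t2, l2 = u₂ :: t2 := by
        cases l2 with
        | nil => simp at hl2head
        | cons b t =>
          have : b = u₂ := by simpa using hl2head
          exact ⟨t, by rw [this]⟩
      have hch2' : List.Chain' (DRel T ord) (v :: u₂ :: t2) :=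
        List.isChain_cons_cons.mpr ⟨⟨hadj2.symm, hou2, by omega⟩, hch2⟩
      have hn2 : (v :: u₂ :: t2).Nodup := desc_nodup hch2'
      have hne : u₁ ≠ u₂ := by
        intro h; rw [h, hc2] at hc1; omega
      exact ⟨u₂ :: t2, hl2len, hch2', hn2,
        branch_disjoint hT (desc_adj_chain hch1') (desc_adj_chain hch2') hn1 hn2 hne⟩
  obtain ⟨l2, hl2len, hch2', hn2, hdisj⟩ := hsecond
  refine ⟨(u₁ :: t1).reverse ++ v :: l2, ?_, ?_, (u₁ :: t1).reverse, l2, v, rfl, ?_, ?_⟩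
  · have : (u₁ :: t1).length = i - 1 := hl1len
    simp only [List.length_append, List.length_reverse, List.length_cons, this, hl2len]
    omega
  · -- Nodup
    refine List.Nodup.append ((List.nodup_reverse).mpr (List.Nodup.of_cons hn1)) hn2 ?_
    intro w hw
    rw [List.mem_reverse] at hw
    intro hw2
    rcases List.mem_cons.mp hw2 with rfl | hw2
    · have := hcolle1 w hw; omega
    · exact hdisj w hw hw2
  · -- increasing chain
    have : List.Chain' (flip fun a b => T.Adj a b ∧ ord a < ord b) (v :: u₁ :: t1) :=
      List.IsChain.imp (fun a b hab => ⟨hab.1.symm, hab.2.1⟩) hch1'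
    have h := List.isChain_reverse.mpr this
    rwa [List.reverse_cons] at h
  · -- decreasing chain
    exact List.IsChain.imp (fun a b hab => ⟨hab.1, hab.2.1⟩) hch2'
end

section
/- For every integer n ≥ 5, let α_n = (ln ln ln n + 1)/(ln ln n − ln ln ln n − 1) and k = ⌈(1+α_n)·ln n/ln ln n⌉. Then k ≥ 2 and (2k)!/4^k ≥ n². -/
/-- Lower bound `(m/e)^m ≤ m!`. -/
lemma pow_div_exp_le_factorial (m : ℕ) :
    ((m : ℝ) / Real.exp 1) ^ m ≤ (Nat.factorial m : ℝ) := by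
  induction m with
  | zero => simp
  | succ m ih =>
    have he : (0:ℝ) < Real.exp 1 := Real.exp_pos 1
    rcases Nat.eq_zero_or_pos m with h0 | hm
    · subst h0
      norm_num
      exact inv_le_one_of_one_le₀ (Real.one_le_exp (by norm_num))
    · have hmR : (0:ℝ) < m := by exact_mod_cast hm
      -- key : (1 + 1/m)^m ≤ e
      have hkey : ((1 : ℝ) + 1/m) ^ m ≤ Real.exp 1 := by
        have h1 : (1:ℝ) + 1/m ≤ Real.exp (1/m) := by
          have := Real.add_one_le_exp (1/(m:ℝ)); linarith
        calc ((1 : ℝ) + 1/m) ^ m ≤ Real.exp (1/m) ^ m := by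
              apply pow_le_pow_left₀ (by positivity) h1
          _ = Real.exp ((m : ℝ) * (1/m)) := (Real.exp_nat_mul _ _).symm
          _ = Real.exp 1 := by rw [mul_one_div, div_self hmR.ne']
      have step : (((m:ℝ)+1) / Real.exp 1) ^ (m+1) ≤ ((m:ℝ)+1) * ((m:ℝ)/Real.exp 1)^m := by
        have hstep0 : ((m:ℝ)+1)/Real.exp 1 = (((m:ℝ)+1)/(m:ℝ)) * ((m:ℝ)/Real.exp 1) := by
          field_simp
        have hexp : (((m:ℝ)+1) / Real.exp 1) ^ (m+1)
            = (((m:ℝ)+1)/Real.exp 1) * ((((m:ℝ)+1)/(m:ℝ))^m * ((m:ℝ)/Real.exp 1)^m) := by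
          calc (((m:ℝ)+1) / Real.exp 1) ^ (m+1)
              = (((m:ℝ)+1)/Real.exp 1) * ((((m:ℝ)+1)/(m:ℝ)) * ((m:ℝ)/Real.exp 1))^m := by
                rw [← hstep0, pow_succ]; ring
            _ = (((m:ℝ)+1)/Real.exp 1) * ((((m:ℝ)+1)/(m:ℝ))^m * ((m:ℝ)/Real.exp 1)^m) := by
                rw [mul_pow]
        rw [hexp]
        have h2 : (((m:ℝ)+1)/(m:ℝ))^m ≤ Real.exp 1 := by
          have : ((m:ℝ)+1)/(m:ℝ) = 1 + 1/m := by field_simp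
          rw [this]; exact hkey
        calc (((m:ℝ)+1)/Real.exp 1) * ((((m:ℝ)+1)/(m:ℝ))^m * ((m:ℝ)/Real.exp 1)^m)
            ≤ (((m:ℝ)+1)/Real.exp 1) * (Real.exp 1 * ((m:ℝ)/Real.exp 1)^m) := by
              apply mul_le_mul_of_nonneg_left _ (by positivity)
              apply mul_le_mul_of_nonneg_right h2 (by positivity)
          _ = ((m:ℝ)+1) * ((m:ℝ)/Real.exp 1)^m := by
              field_simp
      calc (((m+1 : ℕ) : ℝ) / Real.exp 1) ^ (m+1)
          = (((m:ℝ)+1) / Real.exp 1) ^ (m+1) := by push_cast; ring_nf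
        _ ≤ ((m:ℝ)+1) * ((m:ℝ)/Real.exp 1)^m := step
        _ ≤ ((m:ℝ)+1) * (Nat.factorial m : ℝ) := by
              apply mul_le_mul_of_nonneg_left ih (by positivity)
        _ = (Nat.factorial (m+1) : ℝ) := by
              rw [Nat.factorial_succ]; push_cast; ring

/-- For `n ≥ 5`, with `α_n = (ln ln ln n + 1)/(ln ln n − ln ln ln n − 1)` and
`k = ⌈(1+α_n)·ln n/ln ln n⌉`, one has `k ≥ 2` and `(2k)!/4^k ≥ n²`. -/
theorem factorial_bound (n : ℕ) (hn : 5 ≤ n) (α : ℝ)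
    (hα : α = (Real.log (Real.log (Real.log n)) + 1) /
      (Real.log (Real.log n) - Real.log (Real.log (Real.log n)) - 1))
    (k : ℕ) (hk : k = ⌈(1 + α) * Real.log n / Real.log (Real.log n)⌉₊) :
    2 ≤ k ∧ (n : ℝ) ^ 2 ≤ (Nat.factorial (2 * k) : ℝ) / 4 ^ k := by
  set l := Real.log n with hl_def
  set L := Real.log l with hL_def
  set M := Real.log L with hM_def
  have hn5 : (5:ℝ) ≤ (n:ℝ) := by exact_mod_cast hn
  have hnpos : (0:ℝ) < n := by linarith
  -- exp 1.6 < 5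
  have hexp16 : Real.exp 1.6 < 5 := by
    have h5 : (Real.exp 1.6) ^ 5 = Real.exp 8 := by
      rw [← Real.exp_nat_mul]; norm_num
    have h8 : Real.exp 8 = Real.exp 1 ^ 8 := by
      rw [← Real.exp_nat_mul]; norm_num
    have hlt : (Real.exp 1.6)^5 < 5^5 := by
      rw [h5, h8]
      calc Real.exp 1 ^ 8 < 2.7182818286 ^ 8 :=
            pow_lt_pow_left₀ Real.exp_one_lt_d9 (Real.exp_pos 1).le (by norm_num)
        _ < 5^5 := by norm_num
    exact lt_of_pow_lt_pow_left₀ 5 (by norm_num) hlt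
  have hl16 : (1.6:ℝ) < l := by
    have : (1.6:ℝ) < Real.log 5 := (Real.lt_log_iff_exp_lt (by norm_num)).mpr hexp16
    exact lt_of_lt_of_le this (Real.log_le_log (by norm_num) hn5)
  have hlpos : (0:ℝ) < l := by linarith
  -- 1 - 1/x ≤ log x
  have hlog_lb : ∀ x : ℝ, 0 < x → 1 - 1/x ≤ Real.log x := by
    intro x hx
    have := Real.log_le_sub_one_of_pos (show (0:ℝ) < 1/x by positivity)
    rw [Real.log_div one_ne_zero hx.ne', Real.log_one] at this
    linarith
  have hL_lb : (0.375:ℝ) ≤ L := by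
    have h1 : 1 - 1/l ≤ L := hlog_lb l hlpos
    have h2 : 1/l < 1/1.6 := by
      apply one_div_lt_one_div_of_lt (by norm_num) hl16
    have : (1:ℝ)/1.6 = 0.625 := by norm_num
    linarith
  have hLpos : (0:ℝ) < L := by linarith
  -- M ≥ -1
  have hM_lb : (-1:ℝ) ≤ M := by
    rw [hM_def, Real.le_log_iff_exp_le hLpos]
    have h1 : Real.exp (-1) = 1 / Real.exp 1 := by
      rw [Real.exp_neg]; exact inv_eq_one_div _
    have h2 : (1:ℝ)/Real.exp 1 < 1/2.7182818283 := by
      apply one_div_lt_one_div_of_lt (by norm_num) Real.exp_one_gt_d9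
    have : (1:ℝ)/2.7182818283 < 0.375 := by norm_num
    linarith
  -- L ≠ 1
  have hLne1 : L ≠ 1 := by
    rcases le_or_gt n 15 with h15 | h16
    · -- l ≤ log 15 < exp 1, so L < 1
      have hl15 : l ≤ Real.log 15 := Real.log_le_log hnpos (by exact_mod_cast h15)
      have hlog15 : Real.log 15 < Real.exp 1 := by
        have h16 : Real.log 16 = 4 * Real.log 2 := by
          rw [show (16:ℝ) = 2^4 by norm_num, Real.log_pow]; norm_num
        have hfrac : Real.log (15/16 : ℝ) ≤ -(1/16) := by
          have := Real.log_le_sub_one_of_pos (show (0:ℝ) < 15/16 by norm_num)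
          linarith
        have h15e : Real.log 15 = Real.log 16 + Real.log (15/16) := by
          rw [← Real.log_mul (by norm_num) (by norm_num)]; norm_num
        have h2 := Real.log_two_lt_d9
        have he := Real.exp_one_gt_d9
        rw [h15e, h16]; linarith
      have : L < 1 := by
        calc L ≤ Real.log (Real.log 15) := Real.log_le_log hlpos hl15
          _ < Real.log (Real.exp 1) := Real.log_lt_log (by linarith) hlog15
          _ = 1 := Real.log_exp 1
      linarith
    · -- l ≥ log 16 > exp 1, so L > 1
      have hl16' : Real.log 16 ≤ l := by
        apply Real.log_le_log (by norm_num)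
        exact_mod_cast h16
      have h16 : Real.log 16 = 4 * Real.log 2 := by
        rw [show (16:ℝ) = 2^4 by norm_num, Real.log_pow]; norm_num
      have hgt : Real.exp 1 < l := by
        have h2 := Real.log_two_gt_d9
        have he := Real.exp_one_lt_d9
        rw [h16] at hl16'; linarith
      have : 1 < L := by
        calc (1:ℝ) = Real.log (Real.exp 1) := (Real.log_exp 1).symm
          _ < L := Real.log_lt_log (Real.exp_pos 1) hgt
      linarith
  set D := L - M - 1 with hD_def
  have hD : 0 < D := by
    have := Real.log_lt_sub_one_of_pos hLpos hLne1
    rw [← hM_def] at this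
    simp only [hD_def]; linarith
  have hDL : D ≤ L := by simp only [hD_def]; linarith
  -- log l < l, so L < l
  have hLl : L < l := by
    have := Real.log_le_sub_one_of_pos hlpos
    rw [← hL_def] at this; linarith
  -- the key simplification: (1+α) * l / L = l / D
  have hDne : L - M - 1 ≠ 0 := by rw [← hD_def]; exact hD.ne'
  have hsimp : (1 + α) * l / L = l / D := by
    rw [hα, hD_def]
    field_simp
    ring
  rw [hsimp] at hk
  -- k ≥ 2
  have hx1 : (1:ℝ) < l / D := by
    rw [lt_div_iff₀ hD]; linarith
  have hk2 : 2 ≤ k := by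
    rw [hk]
    have : 1 < ⌈l / D⌉₊ := Nat.lt_ceil.mpr (by exact_mod_cast hx1)
    omega
  refine ⟨hk2, ?_⟩
  have hxk : l / D ≤ (k:ℝ) := hk ▸ Nat.le_ceil _
  have hkpos : (0:ℝ) < k := by
    have : (2:ℝ) ≤ k := by exact_mod_cast hk2
    linarith
  -- log k ≥ L - M
  have hlogk : L - M ≤ Real.log k := by
    have h1 : l / L ≤ l / D := div_le_div_of_nonneg_left hlpos.le hD hDL
    have h2 : l / L ≤ (k:ℝ) := le_trans h1 hxk
    have h3 : Real.log (l / L) ≤ Real.log k :=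
      Real.log_le_log (by positivity) h2
    rwa [Real.log_div hlpos.ne' hLpos.ne', ← hL_def, ← hM_def] at h3
  -- main bound: l ≤ k * (log k - 1)
  have hmain : l ≤ (k:ℝ) * (Real.log k - 1) := by
    have h1 : (l / D) * D ≤ (k:ℝ) * (Real.log k - 1) := by
      apply mul_le_mul hxk (by simp only [hD_def]; linarith) hD.le hkpos.le
    rwa [div_mul_cancel₀ _ hD.ne'] at h1
  -- n ≤ (k/e)^k
  have hn_le : (n:ℝ) ≤ ((k:ℝ) / Real.exp 1) ^ k := by
    have h1 : (n:ℝ) = Real.exp l := (Real.exp_log hnpos).symm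
    have h2 : Real.exp l ≤ Real.exp ((k:ℝ) * (Real.log k - 1)) := Real.exp_le_exp.mpr hmain
    have h3 : Real.exp ((k:ℝ) * (Real.log k - 1)) = ((k:ℝ)/Real.exp 1)^k := by
      rw [Real.exp_nat_mul, Real.exp_sub, Real.exp_log hkpos]
    rw [h1, ← h3]; exact h2
  -- conclude
  have h4pos : (0:ℝ) < 4^k := by positivity
  rw [le_div_iff₀ h4pos]
  have hsq : (n:ℝ)^2 ≤ (((k:ℝ)/Real.exp 1)^k)^2 := by
    apply pow_le_pow_left₀ hnpos.le hn_le
  have heq : (((k:ℝ)/Real.exp 1)^k)^2 * 4^k = (((2*k : ℕ):ℝ)/Real.exp 1)^(2*k) := by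
    have h1 : (((2*k:ℕ):ℝ)/Real.exp 1) = 2 * ((k:ℝ)/Real.exp 1) := by push_cast; ring
    rw [h1, mul_pow]
    rw [show ((2:ℝ))^(2*k) = 4^k from by rw [pow_mul]; norm_num]
    rw [← pow_mul, mul_comm k 2]
    ring
  have hfact := pow_div_exp_le_factorial (2*k)
  calc (n:ℝ)^2 * 4^k ≤ (((k:ℝ)/Real.exp 1)^k)^2 * 4^k := by
        apply mul_le_mul_of_nonneg_right hsq h4pos.le
    _ = (((2*k : ℕ):ℝ)/Real.exp 1)^(2*k) := heq
    _ ≤ (Nat.factorial (2*k) : ℝ) := hfact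
end

section
/- Let k ≥ 3 be an integer, let 0 < γ < 1, and let r = ⌈(10/γ²)·k·ln k⌉. Then (1 − (1 − γ/(2k))^r)^k ≥ 1 − γ/(2k). -/
/-- For `k ≥ 3`, `0 < γ < 1` and `r = ⌈(10/γ²)·k·ln k⌉`,
`(1 − (1 − γ/(2k))^r)^k ≥ 1 − γ/(2k)`. -/
theorem peak_value_bound (k : ℕ) (hk : 3 ≤ k) (γ : ℝ) (hγ0 : 0 < γ) (hγ1 : γ < 1)
    (r : ℕ) (hr : r = ⌈10 / γ ^ 2 * k * Real.log k⌉₊) :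
    1 - γ / (2 * k) ≤ (1 - (1 - γ / (2 * k)) ^ r) ^ k := by
  have hk3 : (3:ℝ) ≤ k := by exact_mod_cast hk
  have hk0 : (0:ℝ) < k := by linarith
  set x : ℝ := γ / (2 * k) with hxdef
  have hx0 : 0 < x := by positivity
  have hx1 : x < 1 := by
    rw [hxdef, div_lt_one (by linarith)]; linarith
  have hp0 : 0 ≤ (1 - x) ^ r := pow_nonneg (by linarith) r
  have hp1 : (1 - x) ^ r ≤ 1 := pow_le_one₀ (by linarith) (by linarith)
  -- log k ≥ 1
  have hlogk : 1 ≤ Real.log k := by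
    rw [Real.le_log_iff_exp_le hk0]
    have := Real.exp_one_lt_d9
    linarith
  have hlogk0 : 0 ≤ Real.log k := by linarith
  -- r ≥ 10/γ² * k * log k
  have hrge : 10 / γ ^ 2 * k * Real.log k ≤ (r : ℝ) := by
    rw [hr]; exact Nat.le_ceil _
  -- r * x ≥ 5 log k / γ
  have hrx : 5 * Real.log k / γ ≤ (r : ℝ) * x := by
    have h1 : 10 / γ ^ 2 * k * Real.log k * x = 5 * Real.log k / γ := by
      rw [hxdef]; field_simp; ring
    calc 5 * Real.log k / γ = 10 / γ ^ 2 * k * Real.log k * x := h1.symm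
      _ ≤ (r : ℝ) * x := mul_le_mul_of_nonneg_right hrge (le_of_lt hx0)
  have hc : 3 ≤ 5 / γ - 2 := by
    have : (5:ℝ) ≤ 5 / γ := by
      rw [le_div_iff₀ hγ0]; nlinarith
    linarith
  -- exp (5 log k / γ) ≥ 2 k^2 / γ
  have hexpL : 2 * (k:ℝ) ^ 2 / γ ≤ Real.exp (5 * Real.log k / γ) := by
    have hsplit : 5 * Real.log k / γ = 2 * Real.log k + (5 / γ - 2) * Real.log k := by
      field_simp; ring
    rw [hsplit, Real.exp_add]
    have h2 : Real.exp (2 * Real.log k) = (k:ℝ) ^ 2 := by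
      rw [show (2:ℝ) * Real.log k = Real.log k + Real.log k by ring, Real.exp_add,
        Real.exp_log hk0]
      ring
    rw [h2]
    have h3 : (5 / γ - 2) * Real.log k + 1 ≤ Real.exp ((5 / γ - 2) * Real.log k) :=
      Real.add_one_le_exp _
    have h4 : 5 / γ - 2 ≤ (5 / γ - 2) * Real.log k := by nlinarith
    have h5 : 2 / γ ≤ 5 / γ - 1 := by
      have h3γ : (1:ℝ) ≤ 3 / γ := by rw [le_div_iff₀ hγ0]; linarith
      have : (5:ℝ) / γ = 2 / γ + 3 / γ := by ring
      linarith
    have h6 : 2 / γ ≤ Real.exp ((5 / γ - 2) * Real.log k) := by linarith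
    calc 2 * (k:ℝ) ^ 2 / γ = (k:ℝ) ^ 2 * (2 / γ) := by ring
      _ ≤ (k:ℝ) ^ 2 * Real.exp ((5 / γ - 2) * Real.log k) := by
          exact mul_le_mul_of_nonneg_left h6 (by positivity)
  -- (1-x)^r ≤ exp (-(r x))
  have hstep1 : (1 - x) ^ r ≤ Real.exp (-((r:ℝ) * x)) := by
    have h1 : 1 - x ≤ Real.exp (-x) := by
      have := Real.add_one_le_exp (-x); linarith
    calc (1 - x) ^ r ≤ (Real.exp (-x)) ^ r := pow_le_pow_left₀ (by linarith) h1 r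
      _ = Real.exp ((r:ℝ) * (-x)) := (Real.exp_nat_mul _ r).symm
      _ = Real.exp (-((r:ℝ) * x)) := by ring_nf
  have hstep2 : Real.exp (-((r:ℝ) * x)) ≤ γ / (2 * (k:ℝ) ^ 2) := by
    have hmono : Real.exp (5 * Real.log k / γ) ≤ Real.exp ((r:ℝ) * x) :=
      Real.exp_le_exp.mpr hrx
    have hpos : 0 < 2 * (k:ℝ) ^ 2 / γ := by positivity
    have h7 : 2 * (k:ℝ) ^ 2 / γ ≤ Real.exp ((r:ℝ) * x) := le_trans hexpL hmono
    rw [Real.exp_neg]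
    have := inv_anti₀ hpos h7
    calc (Real.exp ((r:ℝ) * x))⁻¹ ≤ (2 * (k:ℝ) ^ 2 / γ)⁻¹ := this
      _ = γ / (2 * (k:ℝ) ^ 2) := by rw [inv_div]
  -- key: k * (1-x)^r ≤ x
  have hkey : (k:ℝ) * (1 - x) ^ r ≤ x := by
    have h8 : (k:ℝ) * (1 - x) ^ r ≤ (k:ℝ) * (γ / (2 * (k:ℝ) ^ 2)) :=
      mul_le_mul_of_nonneg_left (le_trans hstep1 hstep2) (le_of_lt hk0)
    have h9 : (k:ℝ) * (γ / (2 * (k:ℝ) ^ 2)) = x := by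
      rw [hxdef]; field_simp
    linarith
  -- Bernoulli
  have hbern : 1 - (k:ℝ) * (1 - x) ^ r ≤ (1 - (1 - x) ^ r) ^ k := by
    have := one_add_mul_le_pow (a := -((1 - x) ^ r)) (by linarith) k
    have heq : 1 + (k:ℝ) * -((1 - x) ^ r) = 1 - (k:ℝ) * (1 - x) ^ r := by ring
    rw [heq] at this
    simpa [sub_eq_add_neg] using this
  linarith
end

section
/- There exists an integer K such that for every integer k ≥ K the following holds: setting r = ⌈10·k·(ln k)³⌉ and n_k = (r+1)^{k−1}, one has k ≤ ln n_k ≤ k·(ln ln n_k + 4·ln ln ln n_k). -/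
/-!
Write `ℓ = ln k` and `L = ln (r + 1)`, so `ln n = (k - 1) L` with `ℓ ≤ L ≤ ℓ + 3 ln ℓ + ln 11`.
The lower bound is then immediate. For the upper one, `ln ln n ≥ ln (k - 1) + ln ℓ ≥ ℓ + ln ℓ - ln 2`,
hence `ln ln ln n ≥ ln ℓ - ln 2`, and `ln ln n + 4 ln ln ln n ≥ ℓ + 5 ln ℓ - 5 ln 2` exceeds `L`
as soon as `ℓ² ≥ 11 · 2⁵`.
-/

open Real

lemma log_le_log_natCeil_add_one {k ℓ : ℝ} (hk : 0 < k) (hℓ : 1 ≤ ℓ) :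
    log k ≤ log (⌈10 * k * ℓ ^ 3⌉₊ + 1) := by
  have hℓ3 : 1 ≤ ℓ ^ 3 := one_le_pow₀ hℓ
  have hceil : 10 * k * ℓ ^ 3 ≤ ⌈10 * k * ℓ ^ 3⌉₊ := Nat.le_ceil _
  exact log_le_log hk (by nlinarith)

lemma log_natCeil_add_one_le {k ℓ : ℝ} (hk : 2 ≤ k) (hℓ : 1 ≤ ℓ) :
    log (⌈10 * k * ℓ ^ 3⌉₊ + 1) ≤ log 11 + log k + 3 * log ℓ := by
  have hℓ3 : 1 ≤ ℓ ^ 3 := one_le_pow₀ hℓ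
  have hceil : (⌈10 * k * ℓ ^ 3⌉₊ : ℝ) < 10 * k * ℓ ^ 3 + 1 :=
    Nat.ceil_lt_add_one (by positivity)
  calc log (⌈10 * k * ℓ ^ 3⌉₊ + 1) ≤ log (11 * k * ℓ ^ 3) :=
        log_le_log (by positivity) (by nlinarith)
    _ = log 11 + log k + 3 * log ℓ := by
        rw [log_mul (by positivity) (by positivity), log_mul (by norm_num) (by positivity),
          log_pow, Nat.cast_ofNat]

lemma log_sub_log_two_le_log_sub_one {k : ℝ} (hk : 2 ≤ k) : log k - log 2 ≤ log (k - 1) := by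
  rw [← log_div (by linarith) two_ne_zero]
  exact log_le_log (by linarith) (by linarith)

lemma le_log_mul_add_four_log_log {k L : ℝ} (hk : 2 ≤ k) (hℓ : 20 ≤ log k) (hkL : log k ≤ L)
    (hL : L ≤ log 11 + log k + 3 * log (log k)) :
    L ≤ log ((k - 1) * L) + 4 * log (log ((k - 1) * L)) := by
  set ℓ := log k
  have hlog2 : log 2 ≤ 1 := by linarith [log_two_lt_d9]
  have hlogℓ : 0 ≤ log ℓ := log_nonneg (by linarith)
  have hlogX : ℓ - log 2 + log ℓ ≤ log ((k - 1) * L) := by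
    rw [log_mul (by linarith) (by linarith)]
    linarith [log_sub_log_two_le_log_sub_one hk, log_le_log (by linarith) hkL]
  have hloglogX : log ℓ - log 2 ≤ log (log ((k - 1) * L)) := by
    rw [← log_div (by linarith) two_ne_zero]
    exact log_le_log (by linarith) (by linarith)
  have hconst : log 11 + 5 * log 2 ≤ 2 * log ℓ :=
    calc log 11 + 5 * log 2 = log 352 := by
          rw [show (352 : ℝ) = 11 * 2 ^ 5 by norm_num, log_mul (by norm_num) (by norm_num),
            log_pow, Nat.cast_ofNat]
      _ ≤ log (ℓ ^ 2) := log_le_log (by norm_num) (by nlinarith)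
      _ = 2 * log ℓ := by rw [log_pow, Nat.cast_ofNat]
  linarith

/-- There is `K` such that for all `k ≥ K`, with `r = ⌈10·k·(ln k)³⌉` and
`n_k = (r+1)^(k−1)`, one has `k ≤ ln n_k ≤ k·(ln ln n_k + 4·ln ln ln n_k)`. -/
theorem nk_log_bounds :
    ∃ K : ℕ, ∀ k : ℕ, K ≤ k → ∀ r : ℕ, r = ⌈10 * k * Real.log k ^ 3⌉₊ →
      ∀ n : ℕ, n = (r + 1) ^ (k - 1) →
      (k : ℝ) ≤ Real.log n ∧
        Real.log n ≤ k * (Real.log (Real.log n) + 4 * Real.log (Real.log (Real.log n))) := by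
  refine ⟨⌈exp 20⌉₊, fun k hK r hr n hn => ?_⟩
  subst hr
  have hexp : exp 20 ≤ k := Nat.ceil_le.mp hK
  have hk : (2 : ℝ) ≤ k := by linarith [add_one_le_exp 20]
  have hℓ : 20 ≤ log k := (le_log_iff_exp_le (by linarith)).mpr hexp
  set L := log ((⌈10 * k * log k ^ 3⌉₊ : ℝ) + 1)
  have hkL : log k ≤ L := log_le_log_natCeil_add_one (by linarith) (by linarith)
  have hL : L ≤ log 11 + log k + 3 * log (log k) := log_natCeil_add_one_le hk (by linarith)
  have hlogn : log n = (k - 1) * L := by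
    rw [hn, Nat.cast_pow, log_pow, Nat.cast_sub (by exact_mod_cast hk.trans' one_le_two)]
    push_cast; rfl
  rw [hlogn]
  constructor
  · nlinarith
  · nlinarith [le_log_mul_add_four_log_log hk hℓ hkL hL]
end
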